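/- In the reduced free group K₂ on generators x₁, x₂, writing z = [x₂, x₁], the map ℤ³ → K₂ given by (α, β, γ) ↦ x₁^α x₂^β z^γ is a bijection; that is, every element of K₂ has a unique presentation of the form x₁^α x₂^β [x₂,x₁]^γ with α, β, γ ∈ ℤ. -/

import Mathlib

/-- The commutator `[x, y] = x⁻¹ y⁻¹ x y` used in the paper. -/
def pcomm {G : Type*} [Group G] (x y : G) : G := x⁻¹ * y⁻¹ * x * y

/-- The relators of the reduced free group: `[xᵢ, g⁻¹ xᵢ g]` for every generator `xᵢ`
and every `g` in the free group. -/
def reducedRels (n : ℕ) : Set (FreeGroup (Fin n)) :=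
  { x | ∃ (i : Fin n) (g : FreeGroup (Fin n)),
        x = pcomm (FreeGroup.of i) (g⁻¹ * FreeGroup.of i * g) }

/-- The reduced free group `K_n`, the quotient of the free group `F_n` by the normal
closure of the relators `[xᵢ, g⁻¹ xᵢ g]`. -/
abbrev K (n : ℕ) := FreeGroup (Fin n) ⧸ Subgroup.normalClosure (reducedRels n)

/-- The generator `x_{i+1}` of `K_n` (0-based index `i`). -/
def xg {n : ℕ} (i : Fin n) : K n := QuotientGroup.mk (FreeGroup.of i)

/-!
The relators force `z = [x₂, x₁]` to commute with `x₁` and `x₂`, and for central `z` the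
relation `x₂ x₁ = x₁ x₂ z` gives `x₂^β x₁^α = x₁^α x₂^β z^(αβ)`. Hence normal forms multiply by
the law `(a, b, c)(a', b', c') = (a + a', b + b', c + c' + b a')` of the discrete Heisenberg
group, and `(α, β, γ) ↦ x₁^α x₂^β z^γ` is a homomorphism from it to `K₂`. Conversely
`x₁ ↦ (1, 0, 0)`, `x₂ ↦ (0, 1, 0)` defines a homomorphism `K₂ → ℤ³`, because in the Heisenberg
group every element commutes with its conjugates; the two homomorphisms are mutually inverse.
-/

lemma zpow_mul_zpow_eq_of_commute_pcomm {G : Type*} [Group G] {x y : G}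
    (hx : Commute x (pcomm y x)) (hy : Commute y (pcomm y x)) (a b : ℤ) :
    y ^ b * x ^ a = x ^ a * y ^ b * pcomm y x ^ (a * b) := by
  set z := pcomm y x
  have hxy : SemiconjBy x (y * z) y := by
    simp only [SemiconjBy, z, pcomm]; group
  have hyb : SemiconjBy (y ^ b) x (x * z ^ b) := by
    calc y ^ b * x = x * (y ^ b * z ^ b) := by rw [← hy.mul_zpow, (hxy.zpow_right b).eq]
      _ = x * z ^ b * y ^ b := by rw [(hy.zpow_zpow b b).eq, mul_assoc]
  calc y ^ b * x ^ a = x ^ a * z ^ (a * b) * y ^ b := by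
        rw [(hyb.zpow_right a).eq, (hx.zpow_right b).mul_zpow, ← zpow_mul, mul_comm b]
    _ = x ^ a * y ^ b * z ^ (a * b) := by rw [mul_assoc, ← (hy.zpow_zpow b _).eq, mul_assoc]

lemma commute_of_pcomm_eq_one {G : Type*} [Group G] {x y : G} (h : pcomm x y = 1) :
    Commute x y := by
  have hxy : x * y = y * x * pcomm x y := by unfold pcomm; group
  rwa [h, mul_one] at hxy

lemma map_pcomm {G H : Type*} [Group G] [Group H] (f : G →* H) (x y : G) :
    f (pcomm x y) = pcomm (f x) (f y) := by
  simp [pcomm]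

@[ext] structure Heisenberg where
  a : ℤ
  b : ℤ
  c : ℤ

namespace Heisenberg

instance : Mul Heisenberg := ⟨fun p q => ⟨p.a + q.a, p.b + q.b, p.c + q.c + p.b * q.a⟩⟩
instance : One Heisenberg := ⟨⟨0, 0, 0⟩⟩
instance : Inv Heisenberg := ⟨fun p => ⟨-p.a, -p.b, -p.c + p.a * p.b⟩⟩

@[simp] lemma mul_a (p q : Heisenberg) : (p * q).a = p.a + q.a := rfl
@[simp] lemma mul_b (p q : Heisenberg) : (p * q).b = p.b + q.b := rfl
@[simp] lemma mul_c (p q : Heisenberg) : (p * q).c = p.c + q.c + p.b * q.a := rfl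
@[simp] lemma one_a : (1 : Heisenberg).a = 0 := rfl
@[simp] lemma one_b : (1 : Heisenberg).b = 0 := rfl
@[simp] lemma one_c : (1 : Heisenberg).c = 0 := rfl
@[simp] lemma inv_a (p : Heisenberg) : p⁻¹.a = -p.a := rfl
@[simp] lemma inv_b (p : Heisenberg) : p⁻¹.b = -p.b := rfl
@[simp] lemma inv_c (p : Heisenberg) : p⁻¹.c = -p.c + p.a * p.b := rfl

instance : Group Heisenberg where
  mul_assoc p q r := by ext <;> simp <;> ring
  one_mul p := by ext <;> simp
  mul_one p := by ext <;> simp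
  inv_mul_cancel p := by ext <;> simp; ring

lemma pcomm_conj_eq_one (v w : Heisenberg) : pcomm v (w⁻¹ * v * w) = 1 := by
  ext <;> simp [pcomm]; ring

lemma mk_zpow_of_mul_eq_zero {a b c : ℤ} (h : b * a = 0) (n : ℤ) :
    (⟨a, b, c⟩ : Heisenberg) ^ n = ⟨n * a, n * b, n * c⟩ := by
  induction n using Int.induction_on with
  | zero => ext <;> simp
  | succ n ih => rw [zpow_add_one, ih]; ext <;> simp <;> grind
  | pred n ih => rw [zpow_sub_one, ih]; ext <;> simp <;> grind

section lift

variable {G : Type*} [Group G] (x y : G) (hx : Commute x (pcomm y x)) (hy : Commute y (pcomm y x))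

def lift : Heisenberg →* G where
  toFun p := x ^ p.a * y ^ p.b * pcomm y x ^ p.c
  map_one' := by simp
  map_mul' p q := by
    have hyx := zpow_mul_zpow_eq_of_commute_pcomm hx hy q.a p.b
    set z := pcomm y x
    have hzc : Commute (z ^ p.c) (x ^ q.a * y ^ q.b) :=
      (hx.zpow_zpow q.a p.c).symm.mul_right (hy.zpow_zpow q.b p.c).symm
    symm
    calc x ^ p.a * y ^ p.b * z ^ p.c * (x ^ q.a * y ^ q.b * z ^ q.c)
        = x ^ p.a * y ^ p.b * (z ^ p.c * (x ^ q.a * y ^ q.b)) * z ^ q.c := by group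
      _ = x ^ p.a * (y ^ p.b * x ^ q.a) * y ^ q.b * z ^ p.c * z ^ q.c := by rw [hzc.eq]; group
      _ = x ^ p.a * x ^ q.a * y ^ p.b * (z ^ (q.a * p.b) * y ^ q.b) * z ^ p.c * z ^ q.c := by
          rw [hyx]; group
      _ = x ^ (p.a + q.a) * y ^ (p.b + q.b) * z ^ (p.c + q.c + p.b * q.a) := by
          rw [(hy.zpow_zpow q.b _).symm.eq]; group

end lift

end Heisenberg

lemma commute_xg_conj {n : ℕ} (i : Fin n) (g : K n) : Commute (xg i) (g⁻¹ * xg i * g) := by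
  obtain ⟨g, rfl⟩ := QuotientGroup.mk_surjective g
  refine commute_of_pcomm_eq_one ((QuotientGroup.eq_one_iff _).2 ?_)
  exact Subgroup.subset_normalClosure ⟨i, g, rfl⟩

lemma commute_xg_pcomm_left {n : ℕ} (i j : Fin n) : Commute (xg i) (pcomm (xg i) (xg j)) := by
  have h : pcomm (xg i) (xg j) = (xg i)⁻¹ * ((xg j)⁻¹ * xg i * xg j) := by unfold pcomm; group
  rw [h]
  exact (Commute.refl _).inv_right.mul_right (commute_xg_conj i (xg j))

lemma commute_xg_pcomm_right {n : ℕ} (i j : Fin n) : Commute (xg j) (pcomm (xg i) (xg j)) := by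
  have h : pcomm (xg i) (xg j) = ((xg i)⁻¹ * xg j * xg i)⁻¹ * xg j := by unfold pcomm; group
  rw [h]
  exact (commute_xg_conj j (xg i)).inv_right.mul_right (Commute.refl _)

namespace K2

def toHeisenberg : K 2 →* Heisenberg :=
  QuotientGroup.lift _ (FreeGroup.lift ![⟨1, 0, 0⟩, ⟨0, 1, 0⟩]) <| by
    refine Subgroup.normalClosure_le_normal ?_
    rintro _ ⟨i, g, rfl⟩
    rw [SetLike.mem_coe, MonoidHom.mem_ker, map_pcomm, map_mul, map_mul, map_inv,
      Heisenberg.pcomm_conj_eq_one]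

lemma toHeisenberg_xg_zero : toHeisenberg (xg 0) = ⟨1, 0, 0⟩ := by
  simp [toHeisenberg, xg]

lemma toHeisenberg_xg_one : toHeisenberg (xg 1) = ⟨0, 1, 0⟩ := by
  simp [toHeisenberg, xg]

def ofHeisenberg : Heisenberg →* K 2 :=
  Heisenberg.lift (xg 0) (xg 1) (commute_xg_pcomm_right 1 0) (commute_xg_pcomm_left 1 0)

lemma ofHeisenberg_comp_toHeisenberg :
    ofHeisenberg.comp toHeisenberg = MonoidHom.id (K 2) := by
  refine QuotientGroup.monoidHom_ext _ (FreeGroup.ext_hom _ _ fun i => ?_)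
  fin_cases i <;> simp [ofHeisenberg, toHeisenberg, Heisenberg.lift, xg]

lemma toHeisenberg_ofHeisenberg (p : Heisenberg) : toHeisenberg (ofHeisenberg p) = p := by
  have hz : pcomm (⟨0, 1, 0⟩ : Heisenberg) ⟨1, 0, 0⟩ = ⟨0, 0, 1⟩ := by ext <;> simp [pcomm]
  simp only [ofHeisenberg, Heisenberg.lift, MonoidHom.coe_mk, OneHom.coe_mk, map_mul, map_zpow,
    map_pcomm, toHeisenberg_xg_zero, toHeisenberg_xg_one, hz]
  simp only [Heisenberg.mk_zpow_of_mul_eq_zero, mul_zero, zero_mul]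
  ext <;> simp

end K2

/-- Unique normal form in `K₂`: the map `(α, β, γ) ↦ x₁^α x₂^β [x₂,x₁]^γ` is a
bijection `ℤ³ → K₂`. -/
theorem K2_normal_form :
    Function.Bijective (fun p : ℤ × ℤ × ℤ =>
      (xg 0 : K 2) ^ p.1 * (xg 1 : K 2) ^ p.2.1 * (pcomm (xg 1) (xg 0) : K 2) ^ p.2.2) := by
  refine Function.bijective_iff_has_inverse.2
    ⟨fun g => ((K2.toHeisenberg g).a, (K2.toHeisenberg g).b, (K2.toHeisenberg g).c),
      fun p => ?_, fun g => ?_⟩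
  · have h : K2.toHeisenberg (xg 0 ^ p.1 * xg 1 ^ p.2.1 * pcomm (xg 1) (xg 0) ^ p.2.2) =
        ⟨p.1, p.2.1, p.2.2⟩ := K2.toHeisenberg_ofHeisenberg ⟨p.1, p.2.1, p.2.2⟩
    simp only [h]
  · exact DFunLike.congr_fun K2.ofHeisenberg_comp_toHeisenberg g
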